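/- Let K be a field of characteristic p > 0, q = p^n, and let T = K[X,Y,U,V]/(X^q, Y^q, U^q, V^q, XY − UV). Then the q monomials x^{q-1} y^i u^{q-1-i}, for 0 ≤ i ≤ q−1, are K-linearly independent elements of T, and each of them is annihilated by the ideal (x, y, u, v). -/

import Mathlib

/-!
Everything happens at the level of monomials. Pushing factors `xy` to `uv` and back, each product
of `x, y, u` or `v` with `x^{q-1} y^i u^{q-1-i}` acquires a `q`-th power of a generator.
For independence, `x ↦ t₁, y ↦ s t₂, u ↦ t₂, v ↦ s t₁` is a monomial parametrisation of
`xy = uv` which sends `x^q, y^q, u^q, v^q` into the monomial ideal `(t₁^q, t₂^q)`. It maps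
`x^{q-1} y^i u^{q-1-i}` to `s^i t₁^{q-1} t₂^{q-1}`; these distinct monomials lie outside the
ideal, so they stay linearly independent modulo it.
-/

open MvPolynomial

/-- `T = K[X,Y,U,V]/(X^q, Y^q, U^q, V^q, XY - UV)`. -/
noncomputable abbrev truncHypersurface (K : Type) [Field K] (q : ℕ) : Type :=
  MvPolynomial (Fin 4) K ⧸
    Ideal.span {(X 0 : MvPolynomial (Fin 4) K) ^ q, (X 1) ^ q, (X 2) ^ q, (X 3) ^ q,
      X 0 * X 1 - X 2 * X 3}

section Socle

variable {M : Type*} [CommMonoidWithZero M] {a b c d : M} {i j k : ℕ}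

theorem pow_mul_pow_mul_pow_eq_zero_of_mul_eq_mul (h : a * b = c * d) (hc : c ^ (k + j) = 0) :
    a ^ k * b ^ k * c ^ j = 0 := by
  rw [← mul_pow, h, mul_pow, mul_right_comm, ← pow_add, hc, zero_mul]

/-! With `q = i + j + 1`, the monomial `x^{q-1} y^i u^{q-1-i}` reads
`a ^ (i + j) * b ^ i * c ^ j`. -/

theorem a_mul_socle_eq_zero (ha : a ^ (i + j + 1) = 0) :
    a * (a ^ (i + j) * b ^ i * c ^ j) = 0 := by
  rw [← mul_assoc, ← mul_assoc, ← pow_succ', ha, zero_mul, zero_mul]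

theorem b_mul_socle_eq_zero (h : a * b = c * d) (hb : b ^ (i + j + 1) = 0)
    (hc : c ^ (i + j + 1) = 0) : b * (a ^ (i + j) * b ^ i * c ^ j) = 0 := by
  cases j with
  | zero =>
    calc b * (a ^ (i + 0) * b ^ i * c ^ 0) = b ^ (i + 0 + 1) * a ^ i := by
          simp only [pow_add, pow_one, pow_zero, add_zero, mul_one]; ac_rfl
      _ = 0 := by rw [hb, zero_mul]
  | succ j =>
    calc b * (a ^ (i + (j + 1)) * b ^ i * c ^ (j + 1))
        = a ^ j * (a ^ (i + 1) * b ^ (i + 1) * c ^ (j + 1)) := by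
          simp only [pow_add, pow_one]; ac_rfl
      _ = 0 := by
        rw [pow_mul_pow_mul_pow_eq_zero_of_mul_eq_mul h (by rw [← hc]; ac_rfl), mul_zero]

theorem c_mul_socle_eq_zero (h : a * b = c * d) (hc : c ^ (i + j + 1) = 0) :
    c * (a ^ (i + j) * b ^ i * c ^ j) = 0 := by
  calc c * (a ^ (i + j) * b ^ i * c ^ j) = a ^ j * (a ^ i * b ^ i * c ^ (j + 1)) := by
        simp only [pow_add, pow_one]; ac_rfl
    _ = 0 := by
      rw [pow_mul_pow_mul_pow_eq_zero_of_mul_eq_mul h (by rwa [← add_assoc]), mul_zero]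

theorem d_mul_socle_eq_zero (h : a * b = c * d) (ha : a ^ (i + j + 1) = 0)
    (hd : d ^ (i + j + 1) = 0) : d * (a ^ (i + j) * b ^ i * c ^ j) = 0 := by
  cases j with
  | zero =>
    calc d * (a ^ (i + 0) * b ^ i * c ^ 0) = (a * b) ^ i * d := by
          simp only [mul_pow, pow_zero, add_zero, mul_one]; ac_rfl
      _ = d ^ (i + 0 + 1) * c ^ i := by
          simp only [h, mul_pow, pow_add, pow_one, add_zero]; ac_rfl
      _ = 0 := by rw [hd, zero_mul]
  | succ j =>
    calc d * (a ^ (i + (j + 1)) * b ^ i * c ^ (j + 1))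
        = a ^ (i + (j + 1)) * b ^ i * c ^ j * (c * d) := by
          simp only [pow_add, pow_one]; ac_rfl
      _ = a ^ (i + (j + 1) + 1) * (b ^ (i + 1) * c ^ j) := by
          simp only [← h, pow_add, pow_one]; ac_rfl
      _ = 0 := by rw [ha, zero_mul]

theorem socle_of_mul_eq_mul {q : ℕ} (h : a * b = c * d) (ha : a ^ q = 0) (hb : b ^ q = 0)
    (hc : c ^ q = 0) (hd : d ^ q = 0) (hi : i < q) :
    a * (a ^ (q - 1) * b ^ i * c ^ (q - 1 - i)) = 0 ∧
      b * (a ^ (q - 1) * b ^ i * c ^ (q - 1 - i)) = 0 ∧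
      c * (a ^ (q - 1) * b ^ i * c ^ (q - 1 - i)) = 0 ∧
      d * (a ^ (q - 1) * b ^ i * c ^ (q - 1 - i)) = 0 := by
  obtain ⟨j, rfl⟩ : ∃ j, q = i + j + 1 := ⟨q - 1 - i, by omega⟩
  rw [Nat.add_sub_cancel, Nat.add_sub_cancel_left]
  exact ⟨a_mul_socle_eq_zero ha, b_mul_socle_eq_zero h hb hc, c_mul_socle_eq_zero h hc,
    d_mul_socle_eq_zero h ha hd⟩

end Socle

namespace MvPolynomial

variable {σ R : Type*} [CommRing R]

theorem coeff_eq_zero_of_mem_span_monomial {S : Set (σ →₀ ℕ)} {f : MvPolynomial σ R}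
    (hf : f ∈ Ideal.span ((fun s => monomial s (1 : R)) '' S)) {e : σ →₀ ℕ}
    (he : ∀ s ∈ S, ¬s ≤ e) : coeff e f = 0 := by
  by_contra h
  obtain ⟨s, hs, hse⟩ := mem_ideal_span_monomial_image.mp hf e (mem_support_iff.mpr h)
  exact he s hs hse

theorem linearIndependent_mk_monomial {ι : Type*} {S : Set (σ →₀ ℕ)}
    {e : ι → σ →₀ ℕ} (he : Function.Injective e) (hS : ∀ i, ∀ s ∈ S, ¬s ≤ e i) :
    LinearIndependent R fun i =>
      Ideal.Quotient.mk (Ideal.span ((fun s => monomial s (1 : R)) '' S)) (monomial (e i) 1) := by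
  classical
  set J := Ideal.span ((fun s => monomial s (1 : R)) '' S)
  rw [linearIndependent_iff]
  intro l hl
  have hmem : Finsupp.linearCombination R (fun i => monomial (e i) (1 : R)) l ∈ J := by
    rw [← Ideal.Quotient.eq_zero_iff_mem, ← Ideal.Quotient.mkₐ_eq_mk R,
      ← AlgHom.toLinearMap_apply, Finsupp.apply_linearCombination]
    exact hl
  ext j
  have hcoeff := coeff_eq_zero_of_mem_span_monomial hmem (hS j)
  simpa [Finsupp.linearCombination_apply, Finsupp.sum, coeff_sum, coeff_monomial, he.eq_iff]
    using hcoeff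

end MvPolynomial

section Toric

variable (R : Type*) [CommRing R]

/-- With `t₁, t₂, s` read as `X 0, X 1, X 2`. -/
noncomputable def toricMap : MvPolynomial (Fin 4) R →ₐ[R] MvPolynomial (Fin 3) R :=
  aeval ![X 0, X 2 * X 1, X 1, X 2 * X 0]

theorem span_le_comap_toricMap (q : ℕ) :
    Ideal.span {(X 0 : MvPolynomial (Fin 4) R) ^ q, X 1 ^ q, X 2 ^ q, X 3 ^ q,
        X 0 * X 1 - X 2 * X 3} ≤
      (Ideal.span ((fun s => monomial s (1 : R)) '' {Finsupp.single 0 q, Finsupp.single 1 q})).comap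
        (toricMap R) := by
  set J : Ideal (MvPolynomial (Fin 3) R) :=
    Ideal.span ((fun s => monomial s 1) '' {Finsupp.single 0 q, Finsupp.single 1 q})
  have h0 : (X 0 : MvPolynomial (Fin 3) R) ^ q ∈ J := by
    rw [X_pow_eq_monomial]; exact Ideal.subset_span (Set.mem_image_of_mem _ (by simp))
  have h1 : (X 1 : MvPolynomial (Fin 3) R) ^ q ∈ J := by
    rw [X_pow_eq_monomial]; exact Ideal.subset_span (Set.mem_image_of_mem _ (by simp))
  rw [Ideal.span_le]
  simp only [Set.insert_subset_iff, Set.singleton_subset_iff, SetLike.mem_coe, Ideal.mem_comap,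
    toricMap, map_pow, map_sub, map_mul, aeval_X]
  simp only [Fin.isValue, Matrix.cons_val, mul_pow]
  refine ⟨h0, Ideal.mul_mem_left _ _ h1, h1, Ideal.mul_mem_left _ _ h0, ?_⟩
  convert Ideal.zero_mem _ using 1
  ring

theorem toricMap_X_pow_mul_X_pow_mul_X_pow {q i : ℕ} (hi : i ≤ q - 1) :
    toricMap R (X 0 ^ (q - 1) * X 1 ^ i * X 2 ^ (q - 1 - i)) =
      monomial (Finsupp.single 0 (q - 1) + Finsupp.single 1 (q - 1) + Finsupp.single 2 i) 1 := by
  simp only [toricMap, map_pow, map_mul, aeval_X, Fin.isValue, Matrix.cons_val]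
  obtain ⟨j, hj⟩ := Nat.exists_eq_add_of_le hi
  calc (X 0 : MvPolynomial (Fin 3) R) ^ (q - 1) * (X 2 * X 1) ^ i * X 1 ^ (q - 1 - i)
      = X 0 ^ (q - 1) * X 1 ^ (q - 1) * X 2 ^ i := by
        rw [hj, Nat.add_sub_cancel_left]; ring
    _ = _ := by simp only [X_pow_eq_monomial, monomial_mul, one_mul]

end Toric

theorem linearIndependent_socle_truncHypersurface (K : Type) [Field K] (q : ℕ) :
    LinearIndependent K fun i : Fin q =>
      (Ideal.Quotient.mk _ (X 0) ^ (q - 1) * Ideal.Quotient.mk _ (X 1) ^ (i : ℕ) *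
        Ideal.Quotient.mk _ (X 2) ^ (q - 1 - (i : ℕ)) : truncHypersurface K q) := by
  let e : Fin q → Fin 3 →₀ ℕ := fun i =>
    Finsupp.single 0 (q - 1) + Finsupp.single 1 (q - 1) + Finsupp.single 2 (i : ℕ)
  have he : Function.Injective e := fun i j hij => by
    simpa [e, Fin.ext_iff] using DFunLike.congr_fun hij 2
  have hS : ∀ i, ∀ s ∈ ({Finsupp.single 0 q, Finsupp.single 1 q} : Set (Fin 3 →₀ ℕ)),
      ¬s ≤ e i := by
    rintro i s (rfl | rfl) <;> simpa [e, Finsupp.single_le_iff] using i.pos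
  let ψ := Ideal.quotientMapₐ _ (toricMap K) (span_le_comap_toricMap K q)
  refine LinearIndependent.of_comp ψ.toLinearMap ?_
  have hψ : ∀ i : Fin q,
      ψ (Ideal.Quotient.mk _ (X 0) ^ (q - 1) * Ideal.Quotient.mk _ (X 1) ^ (i : ℕ) *
        Ideal.Quotient.mk _ (X 2) ^ (q - 1 - (i : ℕ))) =
        Ideal.Quotient.mk _ (monomial (e i) 1) := by
    intro i
    simp only [← map_pow, ← map_mul, ψ, Ideal.quotient_map_mkₐ,
      toricMap_X_pow_mul_X_pow_mul_X_pow K (Nat.le_sub_one_of_lt i.isLt)]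
    rfl
  simp only [Function.comp_def, AlgHom.toLinearMap_apply, hψ]
  exact linearIndependent_mk_monomial he hS

theorem truncHypersurface_mk_X_pow (K : Type) [Field K] (q : ℕ) (j : Fin 4) :
    (Ideal.Quotient.mk _ (X j) : truncHypersurface K q) ^ q = 0 := by
  rw [← map_pow, Ideal.Quotient.eq_zero_iff_mem]
  apply Ideal.subset_span
  fin_cases j <;> simp

theorem truncHypersurface_mk_X_mul_X (K : Type) [Field K] (q : ℕ) :
    (Ideal.Quotient.mk _ (X 0) * Ideal.Quotient.mk _ (X 1) : truncHypersurface K q) =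
      Ideal.Quotient.mk _ (X 2) * Ideal.Quotient.mk _ (X 3) := by
  rw [← map_mul, ← map_mul, Ideal.Quotient.mk_eq_mk_iff_sub_mem]
  exact Ideal.subset_span (by simp)

theorem monomials_linearIndependent_and_socle_general
    (K : Type) [Field K] (q : ℕ)
    (x y u v : truncHypersurface K q)
    (hx : x = Ideal.Quotient.mk _ (X 0)) (hy : y = Ideal.Quotient.mk _ (X 1))
    (hu : u = Ideal.Quotient.mk _ (X 2)) (hv : v = Ideal.Quotient.mk _ (X 3)) :
    LinearIndependent K
        (fun i : Fin q => x ^ (q - 1) * y ^ (i : ℕ) * u ^ (q - 1 - (i : ℕ))) ∧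
      ∀ i : Fin q,
        x * (x ^ (q - 1) * y ^ (i : ℕ) * u ^ (q - 1 - (i : ℕ))) = 0 ∧
        y * (x ^ (q - 1) * y ^ (i : ℕ) * u ^ (q - 1 - (i : ℕ))) = 0 ∧
        u * (x ^ (q - 1) * y ^ (i : ℕ) * u ^ (q - 1 - (i : ℕ))) = 0 ∧
        v * (x ^ (q - 1) * y ^ (i : ℕ) * u ^ (q - 1 - (i : ℕ))) = 0 := by
  subst hx hy hu hv
  exact ⟨linearIndependent_socle_truncHypersurface K q, fun i =>
    socle_of_mul_eq_mul (truncHypersurface_mk_X_mul_X K q) (truncHypersurface_mk_X_pow K q 0)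
      (truncHypersurface_mk_X_pow K q 1) (truncHypersurface_mk_X_pow K q 2)
      (truncHypersurface_mk_X_pow K q 3) i.isLt⟩

/-- In `T = K[X,Y,U,V]/(X^q, Y^q, U^q, V^q, XY - UV)` with `q = p^n`, the `q` monomials
`x^{q-1} y^i u^{q-1-i}` (`0 ≤ i ≤ q-1`) are `K`-linearly independent and each is
annihilated by `(x, y, u, v)`. -/
theorem monomials_linearIndependent_and_socle
    (K : Type) [Field K] (p : ℕ) [CharP K p] (hp : 0 < p) (n : ℕ)
    (q : ℕ) (hq : q = p ^ n)
    (x y u v : truncHypersurface K q)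
    (hx : x = Ideal.Quotient.mk _ (X 0)) (hy : y = Ideal.Quotient.mk _ (X 1))
    (hu : u = Ideal.Quotient.mk _ (X 2)) (hv : v = Ideal.Quotient.mk _ (X 3)) :
    LinearIndependent K
        (fun i : Fin q => x ^ (q - 1) * y ^ (i : ℕ) * u ^ (q - 1 - (i : ℕ))) ∧
      ∀ i : Fin q,
        x * (x ^ (q - 1) * y ^ (i : ℕ) * u ^ (q - 1 - (i : ℕ))) = 0 ∧
        y * (x ^ (q - 1) * y ^ (i : ℕ) * u ^ (q - 1 - (i : ℕ))) = 0 ∧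
        u * (x ^ (q - 1) * y ^ (i : ℕ) * u ^ (q - 1 - (i : ℕ))) = 0 ∧
        v * (x ^ (q - 1) * y ^ (i : ℕ) * u ^ (q - 1 - (i : ℕ))) = 0 :=
  monomials_linearIndependent_and_socle_general K q x y u v hx hy hu hv
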